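/- arXiv:0711.3510 — 8 statements merged into one kernel-verified Lean document; each statement's English description precedes it below -/
import Mathlib

section
/- Let η₁,…,ηₙ be real numbers with η₁+⋯+ηₙ = 0 and η₁²+⋯+ηₙ² = 1, and let r_{ij} ≥ 0 for 1 ≤ i < j ≤ n. Then ∑_{i<j} (η_i − η_j)² r_{ij} ≤ ∑_{i<j} r_{ij} + max_{i<j} r_{ij}. -/
/-!
Write `(η i - η j) ^ 2 * r i j = r i j + ((η i - η j) ^ 2 - 1) * r i j`. Only the *far* pairs,
those with `(η i - η j) ^ 2 > 1`, can make the second term positive, so it suffices that the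
excesses `((η i - η j) ^ 2 - 1)⁺` add up to at most `1`. Because `∑ η i ^ 2 = 1`, two far pairs
always share an index and no three indices are pairwise far; hence the far pairs form a star
around one index `v`, and for a star Cauchy–Schwarz gives `∑ j ((η v - η j) ^ 2 - 1) ≤ 1`.
-/

open Finset

theorem sum_sq_sub_le_card_add_one {ι : Type*} (T : Finset ι) (a : ℝ) (x : ι → ℝ)
    (h : a ^ 2 + ∑ j ∈ T, x j ^ 2 ≤ 1) :
    ∑ j ∈ T, (a - x j) ^ 2 ≤ #T + 1 := by
  have hCS : (∑ j ∈ T, x j) ^ 2 ≤ #T * ∑ j ∈ T, x j ^ 2 := sq_sum_le_card_mul_sum_sq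
  have hexpand : ∑ j ∈ T, (a - x j) ^ 2
      = #T * a ^ 2 - 2 * a * ∑ j ∈ T, x j + ∑ j ∈ T, x j ^ 2 := by
    simp only [sub_sq, sum_add_distrib, sum_sub_distrib, sum_const, nsmul_eq_mul, ← mul_sum]
  -- `(a + ∑ x j) ^ 2 ≥ 0` and Cauchy–Schwarz give `∑ (a - x j) ^ 2 ≤ (#T + 1) (a ^ 2 + ∑ x j ^ 2)`
  nlinarith [sq_nonneg (a + ∑ j ∈ T, x j),
    mul_le_mul_of_nonneg_left h (Nat.cast_nonneg (α := ℝ) #T)]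

theorem SimpleGraph.exists_forall_adj_imp_eq_or_eq {V : Type*} (G : SimpleGraph V)
    (hmeet : ∀ a b c d, G.Adj a b → G.Adj c d → a = c ∨ a = d ∨ b = c ∨ b = d)
    (hG : G.CliqueFree 3) {a b : V} (hab : G.Adj a b) :
    ∃ v, ∀ x y, G.Adj x y → x = v ∨ y = v := by
  classical
  by_contra! hmiss
  have hturn : ∀ {u w}, G.Adj u w → ∃ z, G.Adj w z ∧ z ≠ u := by
    intro u w huw
    obtain ⟨x, y, hxy, hxu, hyu⟩ := hmiss u
    rcases hmeet u w x y huw hxy with rfl | rfl | rfl | rfl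
    · exact absurd rfl hxu
    · exact absurd rfl hyu
    · exact ⟨y, hxy, hyu⟩
    · exact ⟨x, hxy.symm, hxu⟩
  obtain ⟨c, hbc, hca⟩ := hturn hab
  obtain ⟨d, had, hdb⟩ := hturn hab.symm
  rcases hmeet b c a d hbc had with rfl | rfl | rfl | rfl
  · exact hab.ne rfl
  · exact hdb rfl
  · exact hca rfl
  · exact hG _ (SimpleGraph.is3Clique_triple_iff.mpr ⟨hab, had, hbc⟩)

section Far

def farGraph {α : Type*} (x : α → ℝ) : SimpleGraph α where
  Adj i j := 1 < (x i - x j) ^ 2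
  symm := ⟨fun i j h => by rwa [sub_sq_comm]⟩
  loopless := ⟨fun i => by simp⟩

@[simp]
theorem farGraph_adj {α : Type*} {x : α → ℝ} {i j : α} :
    (farGraph x).Adj i j ↔ 1 < (x i - x j) ^ 2 :=
  Iff.rfl

variable {α : Type*} [Fintype α] {x : α → ℝ}

theorem farGraph_adj_meet [DecidableEq α] (hx : ∑ i, x i ^ 2 ≤ 1) (a b c d : α)
    (hab : (farGraph x).Adj a b) (hcd : (farGraph x).Adj c d) :
    a = c ∨ a = d ∨ b = c ∨ b = d := by
  by_contra! hne
  obtain ⟨hac, had, hbc, hbd⟩ := hne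
  have hsub := sum_le_univ_sum_of_nonneg (s := {a, b, c, d}) fun i => sq_nonneg (x i)
  rw [sum_insert (by simp [hab.ne, hac, had]), sum_insert (by simp [hbc, hbd]),
    sum_pair hcd.ne] at hsub
  rw [farGraph_adj] at hab hcd
  -- `(u - v) ^ 2 ≤ 2 (u ^ 2 + v ^ 2)`, so the four squares would add up to more than `1`
  nlinarith [sq_nonneg (x a + x b), sq_nonneg (x c + x d)]

theorem farGraph_cliqueFree_three [DecidableEq α] (hx : ∑ i, x i ^ 2 ≤ 1) :
    (farGraph x).CliqueFree 3 := by
  intro s hs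
  obtain ⟨a, b, c, hab, hac, hbc, rfl⟩ := SimpleGraph.is3Clique_iff.mp hs
  have hsub := sum_le_univ_sum_of_nonneg (s := {a, b, c}) fun i => sq_nonneg (x i)
  rw [sum_insert (by simp [hab.ne, hac.ne]), sum_pair hbc.ne] at hsub
  rw [farGraph_adj] at hab hac hbc
  -- the three squared differences add up to `3 ∑ x ^ 2 - (x a + x b + x c) ^ 2 ≤ 3`
  nlinarith [sq_nonneg (x a + x b + x c)]

end Far

theorem sum_lt_pairs_le_sum_of_forall_ne_zero {α : Type*} [Fintype α] [LinearOrder α]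
    (f : α → α → ℝ) (hf : ∀ i j, 0 ≤ f i j) (hsymm : ∀ i j, f i j = f j i) (v : α)
    (hv : ∀ i j, f i j ≠ 0 → i = v ∨ j = v) :
    ∑ p ∈ univ.filter (fun p : α × α => p.1 < p.2), f p.1 p.2 ≤ ∑ j, f v j := by
  set P := univ.filter (fun p : α × α => p.1 < p.2)
  set pairWith : α → α × α := fun j => (min v j, max v j)
  have hsupp : P.filter (fun p => f p.1 p.2 ≠ 0) ⊆ univ.image pairWith := by
    intro p hp
    simp only [P, mem_filter, mem_univ, true_and] at hp
    obtain ⟨hlt, hne⟩ := hp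
    rcases hv _ _ hne with h | h
    · exact mem_image.mpr ⟨p.2, mem_univ _, by simp [pairWith, ← h, hlt.le]⟩
    · exact mem_image.mpr ⟨p.1, mem_univ _, by simp [pairWith, ← h, hlt.le]⟩
  calc ∑ p ∈ P, f p.1 p.2 = ∑ p ∈ P.filter (fun p => f p.1 p.2 ≠ 0), f p.1 p.2 :=
        (sum_filter_ne_zero _).symm
    _ ≤ ∑ p ∈ univ.image pairWith, f p.1 p.2 :=
        sum_le_sum_of_subset_of_nonneg hsupp fun p _ _ => hf _ _
    _ ≤ ∑ j, f (pairWith j).1 (pairWith j).2 :=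
        sum_image_le_of_nonneg fun p _ => hf _ _
    _ = ∑ j, f v j := by
        refine sum_congr rfl fun j _ => ?_
        rcases le_total v j with h | h
        · simp [pairWith, h]
        · simp [pairWith, h, hsymm v j]

theorem sum_lt_pairs_posPart_sq_sub_one_le_one {α : Type*} [Fintype α] [LinearOrder α]
    (x : α → ℝ) (hx : ∑ i, x i ^ 2 ≤ 1) :
    ∑ p ∈ univ.filter (fun p : α × α => p.1 < p.2), ((x p.1 - x p.2) ^ 2 - 1)⁺ ≤ 1 := by
  by_cases hedge : ∃ a b, (farGraph x).Adj a b
  · obtain ⟨a, b, hab⟩ := hedge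
    obtain ⟨v, hv⟩ := (farGraph x).exists_forall_adj_imp_eq_or_eq (farGraph_adj_meet hx)
      (farGraph_cliqueFree_three hx) hab
    set T := univ.filter (fun j => 1 < (x v - x j) ^ 2)
    have hvT : v ∉ T := by simp [T]
    have hT : x v ^ 2 + ∑ j ∈ T, x j ^ 2 ≤ 1 :=
      (sum_insert hvT).symm.trans_le
        ((sum_le_univ_sum_of_nonneg fun i => sq_nonneg (x i)).trans hx)
    calc _ ≤ ∑ j, ((x v - x j) ^ 2 - 1)⁺ :=
          sum_lt_pairs_le_sum_of_forall_ne_zero (fun i j => ((x i - x j) ^ 2 - 1)⁺)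
            (fun _ _ => posPart_nonneg _) (fun i j => by rw [sub_sq_comm])
            v fun i j hij => hv i j <| farGraph_adj.mpr <| sub_pos.mp <|
              posPart_pos_iff.mp <| (posPart_nonneg _).lt_of_ne' hij
      _ = ∑ j ∈ T, ((x v - x j) ^ 2 - 1) := by
          simp only [T, sum_filter, posPart_eq_ite_lt, sub_pos]
      _ ≤ 1 := by
          have := sum_sq_sub_le_card_add_one T (x v) x hT
          simp only [sum_sub_distrib, sum_const, nsmul_eq_mul, mul_one]
          linarith
  · push Not at hedge
    refine (sum_eq_zero fun p _ => ?_).trans_le zero_le_one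
    exact posPart_eq_zero.mpr (by linarith [not_lt.mp (hedge p.1 p.2)])

theorem sum_mul_le_of_sum_posPart_le_one {ι : Type*} (s : Finset ι) (c w : ι → ℝ) {M : ℝ}
    (hc : ∑ i ∈ s, (c i)⁺ ≤ 1) (hw : ∀ i ∈ s, 0 ≤ w i) (hwM : ∀ i ∈ s, w i ≤ M) (hM : 0 ≤ M) :
    ∑ i ∈ s, c i * w i ≤ M :=
  calc ∑ i ∈ s, c i * w i ≤ ∑ i ∈ s, (c i)⁺ * w i :=
        sum_le_sum fun i hi => mul_le_mul_of_nonneg_right (le_posPart _) (hw i hi)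
    _ ≤ ∑ i ∈ s, (c i)⁺ * M :=
        sum_le_sum fun i hi => mul_le_mul_of_nonneg_left (hwM i hi) (posPart_nonneg _)
    _ = (∑ i ∈ s, (c i)⁺) * M := (sum_mul ..).symm
    _ ≤ M := mul_le_of_le_one_left hM hc

theorem stmt_0_general (n : ℕ) (η : Fin n → ℝ)
    (hsq : ∑ i, (η i) ^ 2 = 1)
    (r : Fin n → Fin n → ℝ) (hr : ∀ i j : Fin n, i < j → 0 ≤ r i j) :
    ∑ p ∈ Finset.univ.filter (fun p : Fin n × Fin n => p.1 < p.2),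
        (η p.1 - η p.2) ^ 2 * r p.1 p.2 ≤
      (∑ p ∈ Finset.univ.filter (fun p : Fin n × Fin n => p.1 < p.2), r p.1 p.2) +
        sSup {x : ℝ | ∃ i j : Fin n, i < j ∧ x = r i j} := by
  set P := univ.filter (fun p : Fin n × Fin n => p.1 < p.2)
  set R := {x : ℝ | ∃ i j : Fin n, i < j ∧ x = r i j}
  have hR : BddAbove R := (Set.finite_range fun p : Fin n × Fin n => r p.1 p.2).bddAbove.mono
    (by rintro _ ⟨i, j, -, rfl⟩; exact ⟨(i, j), rfl⟩)
  have hrR : ∀ p ∈ P, r p.1 p.2 ≤ sSup R :=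
    fun p hp => le_csSup hR ⟨p.1, p.2, (mem_filter.mp hp).2, rfl⟩
  have hR0 : 0 ≤ sSup R := Real.sSup_nonneg (by rintro _ ⟨i, j, hij, rfl⟩; exact hr i j hij)
  calc ∑ p ∈ P, (η p.1 - η p.2) ^ 2 * r p.1 p.2
      = ∑ p ∈ P, r p.1 p.2 + ∑ p ∈ P, ((η p.1 - η p.2) ^ 2 - 1) * r p.1 p.2 := by
        rw [← sum_add_distrib]
        exact sum_congr rfl fun p _ => by ring
    _ ≤ ∑ p ∈ P, r p.1 p.2 + sSup R :=
        add_le_add_right (sum_mul_le_of_sum_posPart_le_one P _ _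
          (sum_lt_pairs_posPart_sq_sub_one_le_one η hsq.le)
          (fun p hp => hr _ _ (mem_filter.mp hp).2) hrR hR0) _

theorem stmt_0 (n : ℕ) (hn : 2 ≤ n) (η : Fin n → ℝ)
    (hsum : ∑ i, η i = 0) (hsq : ∑ i, (η i) ^ 2 = 1)
    (r : Fin n → Fin n → ℝ) (hr : ∀ i j : Fin n, i < j → 0 ≤ r i j) :
    ∑ p ∈ Finset.univ.filter (fun p : Fin n × Fin n => p.1 < p.2),
        (η p.1 - η p.2) ^ 2 * r p.1 p.2 ≤
      (∑ p ∈ Finset.univ.filter (fun p : Fin n × Fin n => p.1 < p.2), r p.1 p.2) +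
        sSup {x : ℝ | ∃ i j : Fin n, i < j ∧ x = r i j} :=
  stmt_0_general n η hsq r hr
end

section
/- Let η₁ ≥ η₂ ≥ ⋯ ≥ ηₙ be real numbers with ∑ η_i = 0 and ∑ η_i² = 1, where n > 2. If η₁ − ηₙ > 1, then for all 2 ≤ i < j ≤ n−1 we have η_i − η_j ≤ 1. -/
/-!
Since `(a - b)² ≤ 2 (a² + b²)`, a gap `a - b > 1` forces `a² + b² > 1/2`. Two such gaps between
four distinct coordinates would therefore carry more than the whole unit sum of squares.
-/

lemma one_lt_two_mul_sq_add_sq {a b : ℝ} (h : 1 < a - b) : 1 < 2 * (a ^ 2 + b ^ 2) := by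
  nlinarith [sq_nonneg (a + b)]

lemma sub_le_one_of_sum_sq_le_one {ι : Type*} [Fintype ι] (x : ι → ℝ)
    (hx : ∑ k, x k ^ 2 ≤ 1) {a b c d : ι} (hnodup : [a, b, c, d].Nodup)
    (hab : 1 < x a - x b) : x c - x d ≤ 1 := by
  classical
  by_contra! hcd
  have hfour : x a ^ 2 + x b ^ 2 + x c ^ 2 + x d ^ 2 ≤ 1 := by
    have hsub := Finset.sum_le_univ_sum_of_nonneg (s := [a, b, c, d].toFinset)
      (fun k => sq_nonneg (x k))
    rw [List.sum_toFinset _ hnodup] at hsub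
    simp only [List.map_cons, List.map_nil, List.sum_cons, List.sum_nil] at hsub
    linarith
  linarith [one_lt_two_mul_sq_add_sq hab, one_lt_two_mul_sq_add_sq hcd]

theorem stmt_1 (n : ℕ) (hn : 2 < n) (η : Fin n → ℝ)
    (hsq : ∑ i, (η i) ^ 2 = 1)
    (hgap : η ⟨0, by omega⟩ - η ⟨n - 1, by omega⟩ > 1) :
    ∀ i j : Fin n, 1 ≤ (i : ℕ) → i < j → (j : ℕ) ≤ n - 2 → η i - η j ≤ 1 := by
  intro i j hi hij hj
  refine sub_le_one_of_sum_sq_le_one η hsq.le ?_ hgap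
  rw [Fin.lt_def] at hij
  simp only [List.nodup_cons, List.mem_cons, List.not_mem_nil, List.nodup_nil, Fin.ext_iff,
    or_false, not_false_eq_true, and_true]
  omega
end

section
/- Let s₂,…,sₙ be nonnegative reals, and η₁,…,ηₙ real numbers with ∑ η_i = 0 and ∑ η_i² = 1. Then ∑_{j=2}^n (η₁ − η_j)² s_j ≤ ∑_{j=2}^n s_j + max_{2≤j≤n} s_j. -/
/-!
Write `a = η 0`, `S = ∑ s j` and `M = max s j`. For every real `b`,
`S M (a - b)² ≤ (S + M) (M a² + S b²)`, the difference being `(M a + S b)²`. Weighting by `s j`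
and using `∑ s j η j² ≤ M (1 - a²)` gives `S M · ∑ (a - η j)² s j ≤ (S + M) S M`.
-/

open Finset

theorem mul_mul_sq_sub_le (S M a b : ℝ) :
    S * M * (a - b) ^ 2 ≤ (S + M) * (M * a ^ 2 + S * b ^ 2) := by
  nlinarith [sq_nonneg (M * a + S * b)]

theorem sum_sq_sub_mul_le_sum_add {ι : Type*} (E : Finset ι) (s η : ι → ℝ) (a M : ℝ)
    (hs : ∀ j ∈ E, 0 ≤ s j) (hsM : ∀ j ∈ E, s j ≤ M) (hM : 0 ≤ M)
    (hη : a ^ 2 + ∑ j ∈ E, η j ^ 2 ≤ 1) :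
    ∑ j ∈ E, (a - η j) ^ 2 * s j ≤ ∑ j ∈ E, s j + M := by
  set S := ∑ j ∈ E, s j
  by_cases hzero : ∀ j ∈ E, s j = 0
  · have hS : S = 0 := sum_eq_zero hzero
    rw [hS, sum_eq_zero fun j hj => by rw [hzero j hj, mul_zero]]
    linarith
  push Not at hzero
  obtain ⟨k, hk, hsk⟩ := hzero
  have hsk_pos : 0 < s k := (hs k hk).lt_of_ne' hsk
  have hS_pos : 0 < S := hsk_pos.trans_le (single_le_sum hs hk)
  have hM_pos : 0 < M := hsk_pos.trans_le (hsM k hk)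
  have hQ : ∑ j ∈ E, s j * η j ^ 2 ≤ M * (1 - a ^ 2) :=
    calc ∑ j ∈ E, s j * η j ^ 2 ≤ ∑ j ∈ E, M * η j ^ 2 :=
          sum_le_sum fun j hj => mul_le_mul_of_nonneg_right (hsM j hj) (sq_nonneg _)
      _ ≤ M * (1 - a ^ 2) := by rw [← mul_sum]; nlinarith
  have hweighted : S * M * ∑ j ∈ E, (a - η j) ^ 2 * s j ≤ (S + M) * (S * M) :=
    calc S * M * ∑ j ∈ E, (a - η j) ^ 2 * s j
        = ∑ j ∈ E, s j * (S * M * (a - η j) ^ 2) := by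
          rw [mul_sum]; exact sum_congr rfl fun j _ => by ring
      _ ≤ ∑ j ∈ E, s j * ((S + M) * (M * a ^ 2 + S * η j ^ 2)) :=
          sum_le_sum fun j hj =>
            mul_le_mul_of_nonneg_left (mul_mul_sq_sub_le S M a (η j)) (hs j hj)
      _ = (S + M) * (M * a ^ 2 * S + S * ∑ j ∈ E, s j * η j ^ 2) := by
          simp only [S, mul_sum, ← sum_add_distrib]
          exact sum_congr rfl fun j _ => by ring
      _ ≤ (S + M) * (S * M) := by
          gcongr
          nlinarith
  exact le_of_mul_le_mul_left (by linarith) (mul_pos hS_pos hM_pos)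

theorem stmt_4_general (n : ℕ) (s : Fin (n + 2) → ℝ)
    (hs : ∀ j : Fin (n + 2), j ≠ 0 → 0 ≤ s j)
    (η : Fin (n + 2) → ℝ) (hsq : ∑ i, (η i) ^ 2 = 1) :
    ∑ j ∈ Finset.univ.erase 0, (η 0 - η j) ^ 2 * s j ≤
      (∑ j ∈ Finset.univ.erase 0, s j) +
        sSup {x : ℝ | ∃ j : Fin (n + 2), j ≠ 0 ∧ x = s j} := by
  have hbdd : BddAbove {x : ℝ | ∃ j : Fin (n + 2), j ≠ 0 ∧ x = s j} :=
    ((Set.finite_range s).subset <| by rintro _ ⟨j, -, rfl⟩; exact Set.mem_range_self j).bddAbove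
  have hle_sSup : ∀ j : Fin (n + 2), j ≠ 0 → s j ≤ sSup {x | ∃ j, j ≠ 0 ∧ x = s j} :=
    fun j hj => le_csSup hbdd ⟨j, hj, rfl⟩
  have hone : (1 : Fin (n + 2)) ≠ 0 := Fin.zero_lt_one.ne'
  have hη : η 0 ^ 2 + ∑ j ∈ univ.erase 0, η j ^ 2 = 1 := by
    rw [add_sum_erase _ (fun i => η i ^ 2) (mem_univ 0), hsq]
  exact sum_sq_sub_mul_le_sum_add _ s η (η 0) _
    (fun j hj => hs j (ne_of_mem_erase hj)) (fun j hj => hle_sSup j (ne_of_mem_erase hj))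
    ((hs 1 hone).trans (hle_sSup 1 hone)) hη.le

theorem stmt_4 (n : ℕ) (s : Fin (n + 2) → ℝ)
    (hs : ∀ j : Fin (n + 2), j ≠ 0 → 0 ≤ s j)
    (η : Fin (n + 2) → ℝ) (hsum : ∑ i, η i = 0) (hsq : ∑ i, (η i) ^ 2 = 1) :
    ∑ j ∈ Finset.univ.erase 0, (η 0 - η j) ^ 2 * s j ≤
      (∑ j ∈ Finset.univ.erase 0, s j) +
        sSup {x : ℝ | ∃ j : Fin (n + 2), j ≠ 0 ∧ x = s j} :=
  stmt_4_general n s hs η hsq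
end

section
/- Let A be an n×n real diagonal matrix with ‖A‖ = 1 (Frobenius norm), and let A₂,…,A_m be real symmetric n×n matrices that are pairwise orthogonal under the trace inner product and satisfy ‖A₂‖ ≥ ⋯ ≥ ‖A_m‖. Then ∑_{α=2}^m ‖[A, A_α]‖² ≤ ∑_{α=2}^m ‖A_α‖² + ‖A₂‖². -/
/-!
Write `A = diag a`. The `(i, j)` entry of `[A, B]` is `(aᵢ - aⱼ) Bᵢⱼ`, so the left-hand side is
`∑ᵢⱼ (aᵢ - aⱼ)² wᵢⱼ` with `wᵢⱼ = ∑_α (A_α)ᵢⱼ²`. For `i ≠ j`, Bessel's inequality for the orthogonal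
family `A_α`, tested against `Eᵢⱼ + Eⱼᵢ` (of norm `√2`, with inner product `2 (A_α)ᵢⱼ` by symmetry),
gives `wᵢⱼ ≤ ‖A₂‖² / 2`. Splitting `(aᵢ - aⱼ)² ≤ 1 + ((aᵢ - aⱼ)² - 1)₊`, it remains to see that
`∑ᵢⱼ ((aᵢ - aⱼ)² - 1)₊ ≤ 2` when `∑ aᵢ² = 1`. The pairs with `(aᵢ - aⱼ)² > 1` form a graph with
`e` edges, and for any graph `∑_{ij edge} (aᵢ - aⱼ)² ≤ (e + 1) ∑ aᵢ²`: by Cauchy–Schwarz each edge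
contributes at most `(dᵢ + dⱼ)(aᵢ²/dᵢ + aⱼ²/dⱼ)`, and `dᵢ + dⱼ ≤ e + 1` since at most one edge
joins `i` and `j`.
-/

open Finset RealInnerProductSpace

lemma sq_sub_le_add_mul_sq_div_add_sq_div {x y d e : ℝ} (hd : 0 < d) (he : 0 < e) :
    (x - y) ^ 2 ≤ (d + e) * (x ^ 2 / d + y ^ 2 / e) := by
  rw [div_add_div _ _ hd.ne' he.ne', mul_div_assoc', le_div_iff₀ (by positivity)]
  nlinarith [sq_nonneg (e * x + d * y)]

namespace Finset

variable {ι : Type*} {E : Finset (ι × ι)}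

lemma sum_comp_swap_of_swap_mem {M : Type*} [AddCommMonoid M] (hE : ∀ p ∈ E, p.swap ∈ E)
    (f : ι × ι → M) : ∑ p ∈ E, f p.swap = ∑ p ∈ E, f p :=
  sum_nbij' Prod.swap Prod.swap hE hE (fun _ _ => rfl) (fun _ _ => rfl) (fun _ _ => rfl)

section Degree

variable [DecidableEq ι]

def outDegree (E : Finset (ι × ι)) (i : ι) : ℕ := #{p ∈ E | p.1 = i}

lemma two_mul_outDegree_add_outDegree_le (hE : ∀ p ∈ E, p.swap ∈ E)
    (hloop : ∀ p ∈ E, p.1 ≠ p.2) {i j : ι} (hij : i ≠ j) :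
    2 * (E.outDegree i + E.outDegree j) ≤ #E + 2 := by
  set S := {p ∈ E | p.1 = i ∨ p.1 = j} with hS_def
  set T := {p ∈ E | p.2 = i ∨ p.2 = j}
  have hS : #S = E.outDegree i + E.outDegree j := by
    rw [hS_def, filter_or, card_union_of_disjoint]
    · rfl
    · exact disjoint_filter.2 fun p _ hi hj => hij (hi.symm.trans hj)
  have hT : #T = #S := by
    rw [card_filter, card_filter, ← sum_comp_swap_of_swap_mem hE]
    rfl
  have hST : S ∩ T ⊆ {(i, j), (j, i)} := by
    rintro ⟨k, l⟩ hp
    simp only [S, T, mem_inter, mem_filter] at hp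
    obtain ⟨⟨hpE, h1⟩, -, h2⟩ := hp
    have hkl : k ≠ l := hloop _ hpE
    rcases h1 with rfl | rfl <;> rcases h2 with rfl | rfl <;> simp_all
  have hunion : #(S ∪ T) ≤ #E :=
    card_le_card (union_subset (filter_subset _ _) (filter_subset _ _))
  have hinter : #(S ∩ T) ≤ 2 := (card_le_card hST).trans card_le_two
  have := card_union_add_card_inter S T
  omega

end Degree

theorem sum_sq_sub_le_card_add_two_mul [Fintype ι] (hE : ∀ p ∈ E, p.swap ∈ E)
    (hloop : ∀ p ∈ E, p.1 ≠ p.2) (a : ι → ℝ) :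
    ∑ p ∈ E, (a p.1 - a p.2) ^ 2 ≤ (#E + 2) * ∑ i, a i ^ 2 := by
  classical
  set d : ι → ℝ := fun i => E.outDegree i
  have hd : ∀ p ∈ E, 0 < d p.1 := fun p hp =>
    Nat.cast_pos.2 (card_pos.2 ⟨p, mem_filter.2 ⟨hp, rfl⟩⟩)
  have hedge : ∀ p ∈ E,
      (a p.1 - a p.2) ^ 2 ≤ (#E + 2) / 2 * (a p.1 ^ 2 / d p.1 + a p.2 ^ 2 / d p.2) := by
    intro p hp
    have hdeg : d p.1 + d p.2 ≤ (#E + 2) / 2 := by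
      have := two_mul_outDegree_add_outDegree_le hE hloop (hloop p hp)
      simp only [d]
      rw [le_div_iff₀ two_pos]
      exact_mod_cast (by omega : (E.outDegree p.1 + E.outDegree p.2) * 2 ≤ #E + 2)
    calc (a p.1 - a p.2) ^ 2 ≤ (d p.1 + d p.2) * (a p.1 ^ 2 / d p.1 + a p.2 ^ 2 / d p.2) :=
          sq_sub_le_add_mul_sq_div_add_sq_div (hd p hp) (hd p.swap (hE p hp))
      _ ≤ _ := by gcongr
  have hfiber : ∑ p ∈ E, a p.1 ^ 2 / d p.1 ≤ ∑ i, a i ^ 2 := by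
    rw [← sum_fiberwise_of_maps_to (g := Prod.fst) (t := univ) (fun _ _ => mem_univ _)]
    refine sum_le_sum fun i _ => ?_
    calc ∑ p ∈ E with p.1 = i, a p.1 ^ 2 / d p.1 = d i * (a i ^ 2 / d i) := by
          rw [sum_congr rfl fun p hp => by rw [(mem_filter.1 hp).2], sum_const, nsmul_eq_mul]
          rfl
      _ ≤ a i ^ 2 := by
          rcases eq_or_ne (d i) 0 with h | h
          · rw [h, zero_mul]
            positivity
          · rw [mul_div_cancel₀ _ h]
  calc ∑ p ∈ E, (a p.1 - a p.2) ^ 2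
      ≤ ∑ p ∈ E, (#E + 2) / 2 * (a p.1 ^ 2 / d p.1 + a p.2 ^ 2 / d p.2) := sum_le_sum hedge
    _ = (#E + 2) * ∑ p ∈ E, a p.1 ^ 2 / d p.1 := by
      rw [← mul_sum, sum_add_distrib,
        ← sum_comp_swap_of_swap_mem hE (fun p => a p.2 ^ 2 / d p.2)]
      simp only [Prod.snd_swap]
      ring
    _ ≤ (#E + 2) * ∑ i, a i ^ 2 := by gcongr

end Finset

theorem sum_sum_max_sq_sub_sub_le {ι : Type*} [Fintype ι] (a : ι → ℝ) :
    ∑ i, ∑ j, max ((a i - a j) ^ 2 - ∑ k, a k ^ 2) 0 ≤ 2 * ∑ k, a k ^ 2 := by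
  set S := ∑ k, a k ^ 2
  set E : Finset (ι × ι) := {p | S < (a p.1 - a p.2) ^ 2}
  have hE : ∀ p ∈ E, p.swap ∈ E := fun p hp => by
    simpa only [E, mem_filter, mem_univ, true_and, Prod.fst_swap, Prod.snd_swap,
      ← neg_sub (a p.1), neg_sq] using hp
  have hloop : ∀ p ∈ E, p.1 ≠ p.2 := fun p hp heq =>
    (mem_filter.1 hp).2.not_ge (by rw [heq, sub_self, zero_pow two_ne_zero]; positivity)
  calc ∑ i, ∑ j, max ((a i - a j) ^ 2 - S) 0 = ∑ p ∈ E, ((a p.1 - a p.2) ^ 2 - S) := by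
        rw [← Fintype.sum_prod_type', sum_filter]
        refine sum_congr rfl fun p _ => ?_
        split_ifs with h
        · exact max_eq_left (by linarith)
        · exact max_eq_right (by linarith)
    _ = ∑ p ∈ E, (a p.1 - a p.2) ^ 2 - #E * S := by rw [sum_sub_distrib, sum_const, nsmul_eq_mul]
    _ ≤ 2 * S := by linarith [sum_sq_sub_le_card_add_two_mul hE hloop a]

theorem sum_sum_sq_sub_mul_le {ι : Type*} [Fintype ι] (a : ι → ℝ) {w : ι → ι → ℝ}
    (hw : ∀ i j, 0 ≤ w i j) {K : ℝ} (hK₀ : 0 ≤ K) (hK : ∀ i j, i ≠ j → w i j ≤ K) :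
    ∑ i, ∑ j, (a i - a j) ^ 2 * w i j ≤ (∑ k, a k ^ 2) * (∑ i, ∑ j, w i j + 2 * K) := by
  set S := ∑ k, a k ^ 2
  have hpt : ∀ i j, (a i - a j) ^ 2 * w i j ≤ S * w i j + max ((a i - a j) ^ 2 - S) 0 * K := by
    intro i j
    have hmax : max ((a i - a j) ^ 2 - S) 0 * w i j ≤ max ((a i - a j) ^ 2 - S) 0 * K := by
      rcases eq_or_ne i j with rfl | hij
      · have hS : 0 ≤ S := by positivity
        rw [sub_self, zero_pow two_ne_zero, zero_sub, max_eq_right (by linarith), zero_mul,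
          zero_mul]
      · exact mul_le_mul_of_nonneg_left (hK i j hij) (le_max_right _ _)
    nlinarith [le_max_left ((a i - a j) ^ 2 - S) 0, hw i j]
  calc ∑ i, ∑ j, (a i - a j) ^ 2 * w i j
      ≤ ∑ i, ∑ j, (S * w i j + max ((a i - a j) ^ 2 - S) 0 * K) :=
        sum_le_sum fun i _ => sum_le_sum fun j _ => hpt i j
    _ = S * ∑ i, ∑ j, w i j + (∑ i, ∑ j, max ((a i - a j) ^ 2 - S) 0) * K := by
        simp only [sum_add_distrib, mul_sum, sum_mul]
    _ ≤ S * ∑ i, ∑ j, w i j + (2 * S) * K := by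
        gcongr
        exact sum_sum_max_sq_sub_sub_le a
    _ = S * (∑ i, ∑ j, w i j + 2 * K) := by ring

theorem sum_inner_sq_le_of_pairwise_inner_eq_zero {E ι : Type*} [NormedAddCommGroup E]
    [InnerProductSpace ℝ E] [Fintype ι] {v : ι → E} (hv : Pairwise fun α β => ⟪v α, v β⟫ = 0)
    {N : ℝ} (hN₀ : 0 ≤ N) (hN : ∀ α, ‖v α‖ ^ 2 ≤ N) (x : E) :
    ∑ α, ⟪v α, x⟫ ^ 2 ≤ N * ‖x‖ ^ 2 := by
  classical
  let u : {α // v α ≠ 0} → E := fun α => ‖v α‖⁻¹ • v α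
  have hu : Orthonormal ℝ u := by
    rw [orthonormal_iff_ite]
    rintro ⟨α, hα⟩ ⟨β, hβ⟩
    simp only [u, real_inner_smul_left, real_inner_smul_right, Subtype.mk.injEq]
    split_ifs with h
    · subst h
      rw [real_inner_self_eq_norm_sq]
      field_simp
    · rw [hv h, mul_zero, mul_zero]
  have hterm : ∀ α : {α // v α ≠ 0}, ⟪v α, x⟫ ^ 2 ≤ N * ‖⟪u α, x⟫‖ ^ 2 := by
    intro α
    have hα : ‖v α‖ ≠ 0 := norm_ne_zero_iff.2 α.2
    calc ⟪v α, x⟫ ^ 2 = ‖v α‖ ^ 2 * ‖⟪u α, x⟫‖ ^ 2 := by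
          simp only [u, real_inner_smul_left, Real.norm_eq_abs, sq_abs]
          field_simp
      _ ≤ N * ‖⟪u α, x⟫‖ ^ 2 := by gcongr; exact hN α
  calc ∑ α, ⟪v α, x⟫ ^ 2 = ∑ α : {α // v α ≠ 0}, ⟪v α, x⟫ ^ 2 := by
        rw [← Fintype.sum_subtype_add_sum_subtype (fun α => v α ≠ 0), add_eq_left]
        exact sum_eq_zero fun α _ => by simp [not_not.1 α.2]
    _ ≤ ∑ α : {α // v α ≠ 0}, N * ‖⟪u α, x⟫‖ ^ 2 := sum_le_sum fun α _ => hterm α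
    _ ≤ N * ‖x‖ ^ 2 := by
        rw [← mul_sum]
        exact mul_le_mul_of_nonneg_left (hu.sum_inner_products_le x) hN₀

namespace Matrix

variable {m n : Type*} [Fintype m] [Fintype n]

def toEuclidean (M : Matrix m n ℝ) : EuclideanSpace ℝ (m × n) :=
  WithLp.toLp 2 fun p => M p.1 p.2

lemma inner_toEuclidean (M N : Matrix m n ℝ) :
    ⟪M.toEuclidean, N.toEuclidean⟫ = ∑ i, ∑ j, M i j * N i j := by
  rw [PiLp.inner_apply, Fintype.sum_prod_type]
  simp only [toEuclidean, RCLike.inner_apply, conj_trivial, mul_comm]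

lemma norm_toEuclidean_sq (M : Matrix m n ℝ) : ‖M.toEuclidean‖ ^ 2 = ∑ i, ∑ j, M i j ^ 2 := by
  rw [← real_inner_self_eq_norm_sq, inner_toEuclidean]
  simp only [sq]

variable [DecidableEq n]

lemma IsSymm.inner_toEuclidean_single_add_single {M : Matrix n n ℝ} (hM : M.IsSymm) (i j : n) :
    ⟪M.toEuclidean, EuclideanSpace.single (i, j) 1 + EuclideanSpace.single (j, i) 1⟫ =
      2 * M i j := by
  rw [inner_add_right, EuclideanSpace.inner_single_right, EuclideanSpace.inner_single_right]
  simp only [toEuclidean, conj_trivial, one_mul, hM.apply i j]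
  ring

theorem two_mul_sum_sq_apply_le_of_pairwise_orthogonal {ι : Type*} [Fintype ι]
    {B : ι → Matrix n n ℝ} (hsymm : ∀ α, (B α).IsSymm)
    (horth : Pairwise fun α β => ∑ i, ∑ j, B α i j * B β i j = 0) {N : ℝ} (hN₀ : 0 ≤ N)
    (hN : ∀ α, ∑ i, ∑ j, B α i j ^ 2 ≤ N) {i j : n} (hij : i ≠ j) :
    2 * ∑ α, B α i j ^ 2 ≤ N := by
  set x : EuclideanSpace ℝ (n × n) :=
    EuclideanSpace.single (i, j) 1 + EuclideanSpace.single (j, i) 1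
  have hx : ‖x‖ ^ 2 = 2 := by
    have hne : (i, j) ≠ (j, i) := fun h => hij (Prod.ext_iff.1 h).1
    rw [norm_add_sq_real, EuclideanSpace.inner_single_left, PiLp.norm_single, PiLp.norm_single,
      PiLp.single_apply, if_neg hne]
    norm_num
  have hinner : ∀ α, ⟪(B α).toEuclidean, x⟫ = 2 * B α i j := fun α =>
    (hsymm α).inner_toEuclidean_single_add_single i j
  have hbessel := sum_inner_sq_le_of_pairwise_inner_eq_zero (v := fun α => (B α).toEuclidean)
    (fun α β h => (inner_toEuclidean _ _).trans (horth h)) hN₀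
    (fun α => (norm_toEuclidean_sq _).le.trans (hN α)) x
  simp only [hinner, hx, mul_pow, ← mul_sum] at hbessel
  linarith

lemma IsDiag.commutator_apply {R : Type*} [CommRing R] {A : Matrix n n R} (hA : A.IsDiag)
    (B : Matrix n n R) (i j : n) :
    (A * B - B * A) i j = (A i i - A j j) * B i j := by
  obtain ⟨d, rfl⟩ : ∃ d, A = diagonal d := ⟨_, hA.diagonal_diag.symm⟩
  simp only [sub_apply, diagonal_mul, mul_diagonal, diagonal_apply_eq]
  ring

lemma IsDiag.sum_sum_sq {R : Type*} [Semiring R] {A : Matrix n n R} (hA : A.IsDiag) :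
    ∑ i, ∑ j, A i j ^ 2 = ∑ i, A i i ^ 2 := by
  obtain ⟨d, rfl⟩ : ∃ d, A = diagonal d := ⟨_, hA.diagonal_diag.symm⟩
  simp [diagonal_apply]

end Matrix

theorem stmt_5 (n m : ℕ) (hm : 0 < m)
    (A : Matrix (Fin n) (Fin n) ℝ) (hA : A.IsDiag)
    (hAnorm : ∑ i, ∑ j, (A i j) ^ 2 = 1)
    (B : Fin m → Matrix (Fin n) (Fin n) ℝ)
    (hsymm : ∀ α, (B α).IsSymm)
    (horth : ∀ α β, α ≠ β → ∑ i, ∑ j, B α i j * B β i j = 0)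
    (hmono : Antitone fun α => ∑ i, ∑ j, (B α i j) ^ 2) :
    ∑ α, ∑ i, ∑ j, ((A * B α - B α * A) i j) ^ 2 ≤
      (∑ α, ∑ i, ∑ j, (B α i j) ^ 2) + ∑ i, ∑ j, (B ⟨0, hm⟩ i j) ^ 2 := by
  set N := ∑ i, ∑ j, (B ⟨0, hm⟩ i j) ^ 2
  have hN₀ : 0 ≤ N := by positivity
  have hentry : ∀ i j, i ≠ j → ∑ α, B α i j ^ 2 ≤ N / 2 := fun i j hij => by
    have := Matrix.two_mul_sum_sq_apply_le_of_pairwise_orthogonal hsymm horth hN₀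
      (fun α => hmono (Nat.zero_le α.val)) hij
    linarith
  have hreorder (f : Fin m → Fin n → Fin n → ℝ) :
      ∑ α, ∑ i, ∑ j, f α i j = ∑ i, ∑ j, ∑ α, f α i j := by
    rw [sum_comm]
    exact sum_congr rfl fun _ _ => sum_comm
  calc ∑ α, ∑ i, ∑ j, ((A * B α - B α * A) i j) ^ 2
      = ∑ i, ∑ j, (A i i - A j j) ^ 2 * ∑ α, B α i j ^ 2 := by
        simp only [hA.commutator_apply, mul_pow, mul_sum, hreorder]
    _ ≤ (∑ k, A k k ^ 2) * (∑ i, ∑ j, ∑ α, B α i j ^ 2 + 2 * (N / 2)) :=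
        sum_sum_sq_sub_mul_le _ (fun i j => by positivity) (by positivity) hentry
    _ = (∑ α, ∑ i, ∑ j, (B α i j) ^ 2) + N := by
        rw [← hA.sum_sum_sq, hAnorm, hreorder]
        ring
end

section
/- Let A be an n×n real diagonal matrix with Frobenius norm ‖A‖ = 1, and let B be a real symmetric n×n matrix. Let ‖B‖_∞ = max_{i,j} |b_{ij}|. Then ‖[A,B]‖² ≤ ‖B‖² + 2‖B‖_∞². -/
/-!
Write `A = diagonal a`, so that `[A, B]ᵢⱼ = (aᵢ - aⱼ) Bᵢⱼ` and `‖[A, B]‖² = ∑ wᵢⱼ (aᵢ - aⱼ)²` for the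
symmetric weights `wᵢⱼ = Bᵢⱼ²` (`i ≠ j`), of degrees `dᵢ = ∑ⱼ wᵢⱼ` and total weight `S ≤ ‖B‖²`.
This is twice the Laplacian quadratic form of the weighted graph `w`, and the Anderson–Morley
argument bounds it: by Cauchy–Schwarz `(aᵢ - aⱼ)² ≤ (dᵢ + dⱼ)(aᵢ²/dᵢ + aⱼ²/dⱼ)`, and summing
against `wᵢⱼ` gives `∑ wᵢⱼ (aᵢ - aⱼ)² ≤ 2 max_{wᵢⱼ > 0} (dᵢ + dⱼ) ∑ aᵢ²`. Finally
`2(dᵤ + dᵥ) ≤ S + 2 wᵤᵥ ≤ S + 2‖B‖_∞²` for `u ≠ v`, because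
`S ≥ dᵤ + dᵥ + ∑_{i ≠ u, v} (wᵢᵤ + wᵢᵥ) = 2(dᵤ + dᵥ) - 2wᵤᵥ`.
-/

open Finset Matrix

lemma sq_sub_le_add_mul_div_add_div {x y p q : ℝ} (hp : 0 < p) (hq : 0 < q) :
    (x - y) ^ 2 ≤ (p + q) * (x ^ 2 / p + y ^ 2 / q) := by
  rw [div_add_div _ _ hp.ne' hq.ne', ← mul_div_assoc, le_div_iff₀ (mul_pos hp hq)]
  nlinarith [sq_nonneg (x * q + y * p)]

section WeightedGraph

variable {ι : Type*} [Fintype ι] {w : ι → ι → ℝ}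

lemma two_mul_add_sum_le_sum_sum_add [DecidableEq ι] (hw : ∀ i j, 0 ≤ w i j)
    (hw_symm : ∀ i j, w i j = w j i) (hw_diag : ∀ i, w i i = 0) {u v : ι} (huv : u ≠ v) :
    2 * (∑ j, w u j + ∑ j, w v j) ≤ ∑ i, ∑ j, w i j + 2 * w u v := by
  set g : ι → ℝ := fun i => ∑ j, w i j - (w i u + w i v)
  have hg : ∀ i, 0 ≤ g i := fun i => by
    have := sum_le_sum_of_subset_of_nonneg (subset_univ {u, v}) fun j _ _ => hw i j
    rw [sum_pair huv] at this
    simp only [g]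
    linarith
  have hgsum : ∑ i, g i = ∑ i, ∑ j, w i j - (∑ j, w u j + ∑ j, w v j) := by
    simp only [g, sum_sub_distrib, sum_add_distrib]
    simp only [hw_symm _ u, hw_symm _ v]
  have hpair : g u + g v ≤ ∑ i, g i := by
    rw [← sum_pair huv]
    exact sum_le_sum_of_subset_of_nonneg (subset_univ _) fun i _ _ => hg i
  simp only [g, hw_diag, hw_symm v u] at hpair
  linarith

lemma sum_sum_mul_sq_sub_le (hw : ∀ i j, 0 ≤ w i j) (hw_symm : ∀ i j, w i j = w j i)
    (a : ι → ℝ) {K : ℝ} (hK₀ : 0 ≤ K)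
    (hK : ∀ i j, 0 < w i j → ∑ k, w i k + ∑ k, w j k ≤ K) :
    ∑ i, ∑ j, w i j * (a i - a j) ^ 2 ≤ 2 * K * ∑ i, a i ^ 2 := by
  set d : ι → ℝ := fun i => ∑ k, w i k
  have hd_le : ∀ i j, w i j ≤ d i := fun i j =>
    single_le_sum (fun k _ => hw i k) (mem_univ j)
  have hterm : ∀ i j, w i j * (a i - a j) ^ 2 ≤
      K * (w i j * (a i ^ 2 / d i) + w j i * (a j ^ 2 / d j)) := fun i j => by
    rcases (hw i j).eq_or_lt with h0 | hpos
    · simp [← h0, hw_symm j i]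
    have hdi : 0 < d i := hpos.trans_le (hd_le i j)
    have hdj : 0 < d j := hpos.trans_le ((hw_symm i j).le.trans (hd_le j i))
    calc w i j * (a i - a j) ^ 2
        ≤ w i j * ((d i + d j) * (a i ^ 2 / d i + a j ^ 2 / d j)) := by
          gcongr; exact sq_sub_le_add_mul_div_add_div hdi hdj
      _ ≤ w i j * (K * (a i ^ 2 / d i + a j ^ 2 / d j)) := by
          gcongr; exact hK i j hpos
      _ = K * (w i j * (a i ^ 2 / d i) + w j i * (a j ^ 2 / d j)) := by
          rw [hw_symm j i]; ring
  have hrow : ∀ i, ∑ j, w i j * (a i ^ 2 / d i) ≤ a i ^ 2 := fun i => by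
    rw [← sum_mul]
    rcases (show 0 ≤ d i from sum_nonneg fun k _ => hw i k).eq_or_lt with h0 | hpos
    · rw [show ∑ j, w i j = d i from rfl, ← h0, zero_mul]; positivity
    · rw [mul_div_cancel₀ _ hpos.ne']
  calc ∑ i, ∑ j, w i j * (a i - a j) ^ 2
      ≤ ∑ i, ∑ j, K * (w i j * (a i ^ 2 / d i) + w j i * (a j ^ 2 / d j)) :=
        sum_le_sum fun i _ => sum_le_sum fun j _ => hterm i j
    _ = 2 * K * ∑ i, ∑ j, w i j * (a i ^ 2 / d i) := by
        simp only [← mul_sum, sum_add_distrib]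
        rw [sum_comm (f := fun i j => w j i * (a j ^ 2 / d j))]
        ring
    _ ≤ 2 * K * ∑ i, a i ^ 2 := by
        gcongr with i; exact hrow i

lemma sum_sum_mul_sq_sub_le_of_le [DecidableEq ι] (hw : ∀ i j, 0 ≤ w i j)
    (hw_symm : ∀ i j, w i j = w j i) (hw_diag : ∀ i, w i i = 0) {C : ℝ} (hC₀ : 0 ≤ C)
    (hC : ∀ i j, w i j ≤ C) (a : ι → ℝ) :
    ∑ i, ∑ j, w i j * (a i - a j) ^ 2 ≤ (∑ i, ∑ j, w i j + 2 * C) * ∑ i, a i ^ 2 := by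
  have hS : 0 ≤ ∑ i, ∑ j, w i j := sum_nonneg fun i _ => sum_nonneg fun j _ => hw i j
  have hdeg : ∀ i j, 0 < w i j → ∑ k, w i k + ∑ k, w j k ≤ (∑ i, ∑ j, w i j + 2 * C) / 2 :=
    fun i j hpos => by
      have hij : i ≠ j := by rintro rfl; simp [hw_diag] at hpos
      linarith [two_mul_add_sum_le_sum_sum_add hw hw_symm hw_diag hij, hC i j]
  have := sum_sum_mul_sq_sub_le hw hw_symm a (by positivity) hdeg
  linarith

end WeightedGraph

lemma Matrix.diagonal_mul_sub_mul_diagonal_apply {ι R : Type*} [Fintype ι] [DecidableEq ι]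
    [CommRing R] (a : ι → R) (B : Matrix ι ι R) (i j : ι) :
    (diagonal a * B - B * diagonal a) i j = (a i - a j) * B i j := by
  simp only [sub_apply, diagonal_mul, mul_diagonal]
  ring

lemma Matrix.abs_apply_le_sSup {m n : Type*} [Finite m] [Finite n] (B : Matrix m n ℝ) (i : m)
    (j : n) : |B i j| ≤ sSup {x : ℝ | ∃ i j, x = |B i j|} := by
  have hfin : {x : ℝ | ∃ i j, x = |B i j|}.Finite :=
    (Set.finite_range fun p : m × n => |B p.1 p.2|).subset fun _ ⟨i, j, hx⟩ => ⟨(i, j), hx.symm⟩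
  exact le_csSup hfin.bddAbove ⟨i, j, rfl⟩

theorem stmt_7 (n : ℕ)
    (A : Matrix (Fin n) (Fin n) ℝ) (hA : A.IsDiag)
    (hAnorm : ∑ i, ∑ j, (A i j) ^ 2 = 1)
    (B : Matrix (Fin n) (Fin n) ℝ) (hB : B.IsSymm) :
    ∑ i, ∑ j, ((A * B - B * A) i j) ^ 2 ≤
      (∑ i, ∑ j, (B i j) ^ 2) +
        2 * (sSup {x : ℝ | ∃ i j : Fin n, x = |B i j|}) ^ 2 := by
  obtain ⟨a, rfl⟩ : ∃ a, A = diagonal a := ⟨A.diag, hA.diagonal_diag.symm⟩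
  replace hAnorm : ∑ i, a i ^ 2 = 1 := by simpa [diagonal_apply, ite_pow] using hAnorm
  set c := sSup {x : ℝ | ∃ i j : Fin n, x = |B i j|}
  set w : Fin n → Fin n → ℝ := fun i j => if i = j then 0 else B i j ^ 2
  have hw : ∀ i j, 0 ≤ w i j := fun i j => by positivity
  have hw_symm : ∀ i j, w i j = w j i := fun i j => by simp only [w, eq_comm, hB.apply]
  have hwc : ∀ i j, w i j ≤ c ^ 2 := fun i j => by
    by_cases h : i = j
    · simp [w, h, sq_nonneg]
    · simpa [w, h] using sq_le_sq.mpr ((B.abs_apply_le_sSup i j).trans (le_abs_self c))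
  have hcomm : ∀ i j, ((diagonal a * B - B * diagonal a) i j) ^ 2 = w i j * (a i - a j) ^ 2 :=
    fun i j => by
      rw [diagonal_mul_sub_mul_diagonal_apply]; by_cases h : i = j <;> simp [w, h]; ring
  have hwB : ∑ i, ∑ j, w i j ≤ ∑ i, ∑ j, B i j ^ 2 :=
    sum_le_sum fun i _ => sum_le_sum fun j _ => by by_cases h : i = j <;> simp [w, h, sq_nonneg]
  have := sum_sum_mul_sq_sub_le_of_le hw hw_symm (by simp [w]) (sq_nonneg c) hwc a
  simp only [hcomm, hAnorm, mul_one] at this ⊢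
  linarith
end

section
/- Let X be an n×n real matrix and T(Z) = [Xᵀ,[X,Z]]. If T(Y) = αY for some α ∈ ℝ, then T([Xᵀ, Yᵀ]) = α[Xᵀ, Yᵀ]. -/
/-! Transposition commutes with double commutators, so transposing `⁅Xᵀ, ⁅X, Y⁆⁆ = α • Y` gives
`⁅X, ⁅Xᵀ, Yᵀ⁆⁆ = α • Yᵀ`; bracketing this with `Xᵀ` is the claim. -/

open Matrix

attribute [local instance] LieRing.ofAssociativeRing

theorem Matrix.transpose_lie_lie {m R : Type*} [Fintype m] [DecidableEq m] [CommRing R]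
    (A B C : Matrix m m R) : ⁅A, ⁅B, C⁆⁆ᵀ = ⁅Aᵀ, ⁅Bᵀ, Cᵀ⁆⁆ := by
  rw [lie_transpose, lie_transpose, ← lie_skew, ← lie_skew Cᵀ, lie_neg, neg_neg]

theorem stmt_14 (n : ℕ) (X Y : Matrix (Fin n) (Fin n) ℝ) (α : ℝ)
    (hY : Xᵀ * (X * Y - Y * X) - (X * Y - Y * X) * Xᵀ = α • Y) :
    Xᵀ * (X * (Xᵀ * Yᵀ - Yᵀ * Xᵀ) - (Xᵀ * Yᵀ - Yᵀ * Xᵀ) * X)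
      - (X * (Xᵀ * Yᵀ - Yᵀ * Xᵀ) - (Xᵀ * Yᵀ - Yᵀ * Xᵀ) * X) * Xᵀ
      = α • (Xᵀ * Yᵀ - Yᵀ * Xᵀ) := by
  simp only [← Ring.lie_def] at hY ⊢
  have hYt : ⁅X, ⁅Xᵀ, Yᵀ⁆⁆ = α • Yᵀ := by
    simpa only [transpose_lie_lie, transpose_transpose, transpose_smul] using congr_arg transpose hY
  rw [hYt, lie_smul]
end

section
/- Let X be an n×n real matrix and let α > 0 be the maximum eigenvalue of the operator T(Z) = [Xᵀ,[X,Z]] on M_n(ℝ). Then the eigenspace of T for α has dimension at least 2. -/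
/-!
If `Z` is an eigenvector of `T = ad Xᵀ ∘ ad X` for an eigenvalue `α ≠ 0`, then so is `⁅X, Z⁆ᵀ`:
transposing turns `ad X` into `-ad Xᵀ` and back, and the two signs cancel. It is nonzero, since
`⁅X, Z⁆ = 0` would force `α • Z = 0`, and it is orthogonal to `Z` for the trace inner product,
because `trace (⁅X, Z⁆ * Z) = 0`. Two nonzero orthogonal eigenvectors span a plane.
-/

open Matrix

-- The commutator bracket on an associative ring is only a local instance in Mathlib.
attribute [local instance] LieRing.ofAssociativeRing

namespace Matrix

variable {m n R : Type*} [Fintype m]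

theorem trace_lie_mul_self [DecidableEq m] [CommRing R] (X Z : Matrix m m R) :
    trace (⁅X, Z⁆ * Z) = 0 := by
  rw [Ring.lie_def, sub_mul, trace_sub, Matrix.mul_assoc, trace_mul_comm X, Matrix.mul_assoc,
    trace_mul_comm Z (Z * X), sub_self]

theorem lie_transpose_lie_transpose_eq_smul [DecidableEq m] [CommRing R] {X Z : Matrix m m R}
    {α : R} (h : ⁅Xᵀ, ⁅X, Z⁆⁆ = α • Z) : ⁅Xᵀ, ⁅X, ⁅X, Z⁆ᵀ⁆⁆ = α • ⁅X, Z⁆ᵀ := by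
  have hX : ⁅X, ⁅X, Z⁆ᵀ⁆ = -(α • Zᵀ) := by
    rw [← transpose_transpose X, ← lie_transpose, transpose_transpose, ← lie_skew, h,
      transpose_neg, transpose_smul]
  rw [hX, lie_neg, lie_smul, ← transpose_transpose X, ← lie_transpose, transpose_transpose,
    ← lie_skew, transpose_neg, smul_neg, neg_neg]

theorem linearIndependent_pair_of_trace_conjTranspose_mul_eq_zero [Field R] [PartialOrder R]
    [StarRing R] [StarOrderedRing R] [Fintype n] {A B : Matrix m n R} (hA : A ≠ 0) (hB : B ≠ 0)
    (horth : trace (Aᴴ * B) = 0) : LinearIndependent R ![A, B] := by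
  rw [LinearIndependent.pair_iff' hA]
  rintro a rfl
  rw [Matrix.mul_smul, trace_smul, smul_eq_mul, mul_eq_zero,
    trace_conjTranspose_mul_self_eq_zero_iff] at horth
  exact hB (by rcases horth with rfl | rfl <;> simp)

end Matrix

theorem Submodule.two_le_finrank_of_linearIndependent_pair {K V : Type*} [DivisionRing K]
    [AddCommGroup V] [Module K V] [FiniteDimensional K V] {p : Submodule K V} {x y : V}
    (hx : x ∈ p) (hy : y ∈ p) (hxy : LinearIndependent K ![x, y]) : 2 ≤ Module.finrank K p := by
  calc 2 = Module.finrank K (span K (Set.range ![x, y])) := by simp [finrank_span_eq_card hxy]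
    _ ≤ Module.finrank K p := Submodule.finrank_mono <| span_le.mpr <| by
      simp [Set.insert_subset_iff, hx, hy]

theorem stmt_16_general (n : ℕ) (X : Matrix (Fin n) (Fin n) ℝ)
    (T : Module.End ℝ (Matrix (Fin n) (Fin n) ℝ))
    (hT : ∀ Y, T Y = Xᵀ * (X * Y - Y * X) - (X * Y - Y * X) * Xᵀ)
    (α : ℝ) (hpos : 0 < α)
    (heig : Module.End.HasEigenvalue T α) :
    2 ≤ Module.finrank ℝ (Module.End.eigenspace T α) := by
  have hT_lie : ∀ Y, T Y = ⁅Xᵀ, ⁅X, Y⁆⁆ := by simpa only [Ring.lie_def] using hT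
  obtain ⟨Z, hZmem, hZne⟩ := heig.exists_hasEigenvector
  have hZ : ⁅Xᵀ, ⁅X, Z⁆⁆ = α • Z := hT_lie Z ▸ Module.End.mem_eigenspace_iff.mp hZmem
  have hWmem : ⁅X, Z⁆ᵀ ∈ Module.End.eigenspace T α := by
    rw [Module.End.mem_eigenspace_iff, hT_lie]
    exact lie_transpose_lie_transpose_eq_smul hZ
  have hWne : ⁅X, Z⁆ᵀ ≠ 0 := by
    intro hW
    rw [transpose_eq_zero.mp hW, lie_zero, eq_comm, smul_eq_zero] at hZ
    exact hZ.elim hpos.ne' hZne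
  have horth : trace (Zᴴ * ⁅X, Z⁆ᵀ) = 0 := by
    rw [conjTranspose_eq_transpose_of_trivial, ← transpose_mul, trace_transpose,
      trace_lie_mul_self]
  exact Submodule.two_le_finrank_of_linearIndependent_pair hZmem hWmem
    (linearIndependent_pair_of_trace_conjTranspose_mul_eq_zero hZne hWne horth)

theorem stmt_16 (n : ℕ) (X : Matrix (Fin n) (Fin n) ℝ)
    (T : Module.End ℝ (Matrix (Fin n) (Fin n) ℝ))
    (hT : ∀ Y, T Y = Xᵀ * (X * Y - Y * X) - (X * Y - Y * X) * Xᵀ)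
    (α : ℝ) (hpos : 0 < α)
    (heig : Module.End.HasEigenvalue T α)
    (hmax : ∀ β : ℝ, Module.End.HasEigenvalue T β → β ≤ α) :
    2 ≤ Module.finrank ℝ (Module.End.eigenspace T α) :=
  stmt_16_general n X T hT α hpos heig
end

section
/- For n×n real matrices X, Y with X normal (XXᵀ = XᵀX), ‖[X,Y]‖² ≤ 2‖X‖²‖Y‖², where ‖·‖ denotes the Frobenius norm. -/
/-!
Conjugating by an orthogonal matrix that diagonalises `XᵀX = XXᵀ = diag μ` preserves all the
sums of squares, and makes `X` commute with `diag μ`. Then `‖XY‖² = ∑ μᵢ yᵢⱼ²` and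
`‖YX‖² = ∑ μⱼ yᵢⱼ²`, so `‖[X,Y]‖² ≤ 2 ∑ (μᵢ + μⱼ) yᵢⱼ²`. Since `∑ μ = ‖X‖²`, the weight is at most
`‖X‖²` off the diagonal, and on the diagonal unless `2μᵢ > ‖X‖²`. Such an `i` is the only index
with eigenvalue `μᵢ`, so `X` commutes with the matrix unit at `(i, i)`, and `yᵢᵢ` can be set to
zero without changing the commutator.
-/

open Matrix

section SumSq

variable {m n : Type*} [Fintype m] [Fintype n]

theorem sum_sum_sq_eq_trace (A : Matrix m n ℝ) : ∑ i, ∑ j, A i j ^ 2 = trace (Aᵀ * A) := by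
  simp only [trace, diag, mul_apply, transpose_apply, sq]
  exact Finset.sum_comm

theorem sum_sum_sq_transpose (A : Matrix m n ℝ) :
    ∑ i, ∑ j, Aᵀ i j ^ 2 = ∑ i, ∑ j, A i j ^ 2 :=
  Finset.sum_comm

theorem sum_sum_sq_sub_le (A B : Matrix m n ℝ) :
    ∑ i, ∑ j, (A - B) i j ^ 2 ≤ 2 * ∑ i, ∑ j, A i j ^ 2 + 2 * ∑ i, ∑ j, B i j ^ 2 := by
  simp only [Finset.mul_sum, ← Finset.sum_add_distrib]
  gcongr with i _ j _
  rw [Matrix.sub_apply]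
  nlinarith [sq_nonneg (A i j + B i j)]

end SumSq

section Conjugation

variable {n : Type*} [Fintype n] [DecidableEq n]

theorem transpose_conjStarAlgAut (u : unitary (Matrix n n ℝ)) (A : Matrix n n ℝ) :
    (Unitary.conjStarAlgAut ℝ _ u A)ᵀ = Unitary.conjStarAlgAut ℝ _ u Aᵀ := by
  simpa [star_eq_conjTranspose] using (map_star (Unitary.conjStarAlgAut ℝ _ u) A).symm

theorem sum_sum_sq_conjStarAlgAut (u : unitary (Matrix n n ℝ)) (A : Matrix n n ℝ) :
    ∑ i, ∑ j, Unitary.conjStarAlgAut ℝ _ u A i j ^ 2 = ∑ i, ∑ j, A i j ^ 2 := by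
  rw [sum_sum_sq_eq_trace, sum_sum_sq_eq_trace, transpose_conjStarAlgAut, ← map_mul,
    Unitary.conjStarAlgAut_apply, trace_mul_cycle, Unitary.coe_star_mul_self, one_mul]

theorem exists_conjStarAlgAut_normal_eq_diagonal (X : Matrix n n ℝ) (hX : X * Xᵀ = Xᵀ * X) :
    ∃ (u : unitary (Matrix n n ℝ)) (μ : n → ℝ),
      (Unitary.conjStarAlgAut ℝ _ u X)ᵀ * Unitary.conjStarAlgAut ℝ _ u X = diagonal μ ∧
      Unitary.conjStarAlgAut ℝ _ u X * (Unitary.conjStarAlgAut ℝ _ u X)ᵀ = diagonal μ := by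
  have hS : (Xᵀ * X).IsHermitian := by
    simpa using isHermitian_conjTranspose_mul_self X
  refine ⟨star hS.eigenvectorUnitary, hS.eigenvalues, ?_, ?_⟩
  · rw [transpose_conjStarAlgAut, ← map_mul]
    exact hS.conjStarAlgAut_star_eigenvectorUnitary
  · rw [transpose_conjStarAlgAut, ← map_mul,
      congrArg (Unitary.conjStarAlgAut ℝ _ (star hS.eigenvectorUnitary)) hX]
    exact hS.conjStarAlgAut_star_eigenvectorUnitary

end Conjugation

section NormalDiagonal

variable {n : Type*} [Fintype n] [DecidableEq n] {X : Matrix n n ℝ} {μ : n → ℝ}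

theorem eq_sum_sq_of_transpose_mul_self_eq_diagonal (h : Xᵀ * X = diagonal μ) (i : n) :
    μ i = ∑ k, X k i ^ 2 := by
  simpa [mul_apply, sq] using (congr_fun₂ h i i).symm

theorem sum_sum_sq_mul_of_transpose_mul_self_eq_diagonal (h : Xᵀ * X = diagonal μ)
    (Y : Matrix n n ℝ) : ∑ i, ∑ j, (X * Y) i j ^ 2 = ∑ i, ∑ j, μ i * Y i j ^ 2 := by
  rw [sum_sum_sq_eq_trace, transpose_mul, Matrix.mul_assoc, ← Matrix.mul_assoc Xᵀ, h]
  simp only [trace, diag_apply, mul_apply, transpose_apply, diagonal_apply, ite_mul, zero_mul,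
    Finset.sum_ite_eq, Finset.mem_univ, if_true, sq]
  rw [Finset.sum_comm]
  exact Finset.sum_congr rfl fun i _ => Finset.sum_congr rfl fun j _ => by ring

theorem commute_diagonal_of_normal_eq_diagonal (h₁ : Xᵀ * X = diagonal μ)
    (h₂ : X * Xᵀ = diagonal μ) {d : n → ℝ} (hd : ∀ i j, μ i = μ j → d i = d j) :
    X * diagonal d = diagonal d * X := by
  have hμ : X * (Xᵀ * X) = X * Xᵀ * X := (Matrix.mul_assoc _ _ _).symm
  rw [h₁, h₂] at hμ
  ext i j
  rw [mul_diagonal, diagonal_mul]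
  by_cases hij : μ i = μ j
  · rw [hd i j hij, mul_comm]
  · have hX : X i j * (μ j - μ i) = 0 := by
      have := congr_fun₂ hμ i j
      rw [mul_diagonal, diagonal_mul] at this
      linear_combination this
    rcases mul_eq_zero.mp hX with h0 | h0
    · simp [h0]
    · exact absurd (sub_eq_zero.mp h0).symm hij

theorem sum_sum_sq_commutator_le_weighted (h₁ : Xᵀ * X = diagonal μ)
    (h₂ : X * Xᵀ = diagonal μ) (Y : Matrix n n ℝ) :
    ∑ i, ∑ j, (X * Y - Y * X) i j ^ 2 ≤ 2 * ∑ i, ∑ j, (μ i + μ j) * Y i j ^ 2 := by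
  have hYX : ∑ i, ∑ j, (Y * X) i j ^ 2 = ∑ i, ∑ j, μ j * Y i j ^ 2 := by
    have h₂' : Xᵀᵀ * Xᵀ = diagonal μ := by rwa [transpose_transpose]
    rw [← sum_sum_sq_transpose, transpose_mul,
      sum_sum_sq_mul_of_transpose_mul_self_eq_diagonal h₂', Finset.sum_comm]
    rfl
  calc ∑ i, ∑ j, (X * Y - Y * X) i j ^ 2
      ≤ 2 * ∑ i, ∑ j, (X * Y) i j ^ 2 + 2 * ∑ i, ∑ j, (Y * X) i j ^ 2 :=
        sum_sum_sq_sub_le _ _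
    _ = 2 * ∑ i, ∑ j, (μ i + μ j) * Y i j ^ 2 := by
        rw [hYX, sum_sum_sq_mul_of_transpose_mul_self_eq_diagonal h₁, ← mul_add,
          ← Finset.sum_add_distrib]
        simp only [← Finset.sum_add_distrib, add_mul]

theorem sum_sum_sq_commutator_le_of_normal_eq_diagonal (h₁ : Xᵀ * X = diagonal μ)
    (h₂ : X * Xᵀ = diagonal μ) (Y : Matrix n n ℝ) :
    ∑ i, ∑ j, (X * Y - Y * X) i j ^ 2 ≤
      2 * (∑ i, ∑ j, X i j ^ 2) * ∑ i, ∑ j, Y i j ^ 2 := by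
  set T := ∑ i, ∑ j, X i j ^ 2
  have hμ : ∀ i, 0 ≤ μ i := fun i => by
    rw [eq_sum_sq_of_transpose_mul_self_eq_diagonal h₁]; positivity
  have hT : ∑ i, μ i = T := by
    simp only [eq_sum_sq_of_transpose_mul_self_eq_diagonal h₁]; exact Finset.sum_comm
  have hpair : ∀ i j, i ≠ j → μ i + μ j ≤ T := fun i j hij => by
    rw [← hT, ← Finset.sum_pair hij]
    exact Finset.sum_le_sum_of_subset_of_nonneg (Finset.subset_univ _) fun k _ _ => hμ k
  set d : n → ℝ := fun i => if T < 2 * μ i then Y i i else 0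
  have hd : ∀ i j, μ i = μ j → d i = d j := fun i j hij => by
    rcases eq_or_ne i j with rfl | hne
    · rfl
    · have := hpair i j hne
      simp only [d, if_neg (show ¬T < 2 * μ i by linarith), if_neg (show ¬T < 2 * μ j by linarith)]
  have hcomm : X * (Y - diagonal d) - (Y - diagonal d) * X = X * Y - Y * X := by
    rw [Matrix.mul_sub, Matrix.sub_mul, commute_diagonal_of_normal_eq_diagonal h₁ h₂ hd]
    abel
  have hentry : ∀ i j, (μ i + μ j) * (Y - diagonal d) i j ^ 2 ≤ T * Y i j ^ 2 := by
    intro i j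
    rcases eq_or_ne i j with rfl | hne
    · have hdi : (Y - diagonal d) i i = Y i i - d i := by rw [Matrix.sub_apply, diagonal_apply_eq]
      by_cases hi : T < 2 * μ i
      · have hT0 : 0 ≤ T := hT ▸ Finset.sum_nonneg fun k _ => hμ k
        rw [hdi, show d i = Y i i from if_pos hi, sub_self, zero_pow two_ne_zero, mul_zero]
        exact mul_nonneg hT0 (sq_nonneg _)
      · rw [hdi, show d i = 0 from if_neg hi, sub_zero]
        exact mul_le_mul_of_nonneg_right (by linarith) (sq_nonneg _)
    · simp only [Matrix.sub_apply, diagonal_apply_ne _ hne, sub_zero]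
      exact mul_le_mul_of_nonneg_right (hpair i j hne) (sq_nonneg _)
  calc ∑ i, ∑ j, (X * Y - Y * X) i j ^ 2
      ≤ 2 * ∑ i, ∑ j, (μ i + μ j) * (Y - diagonal d) i j ^ 2 := by
        rw [← hcomm]; exact sum_sum_sq_commutator_le_weighted h₁ h₂ _
    _ ≤ 2 * ∑ i, ∑ j, T * Y i j ^ 2 := by
        gcongr 2 * ?_
        exact Finset.sum_le_sum fun i _ => Finset.sum_le_sum fun j _ => hentry i j
    _ = 2 * T * ∑ i, ∑ j, Y i j ^ 2 := by simp only [← Finset.mul_sum]; ring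

end NormalDiagonal

theorem stmt_19 (n : ℕ) (X Y : Matrix (Fin n) (Fin n) ℝ)
    (hnormal : X * Xᵀ = Xᵀ * X) :
    ∑ i, ∑ j, ((X * Y - Y * X) i j) ^ 2 ≤
      2 * (∑ i, ∑ j, (X i j) ^ 2) * (∑ i, ∑ j, (Y i j) ^ 2) := by
  obtain ⟨u, μ, h₁, h₂⟩ := exists_conjStarAlgAut_normal_eq_diagonal X hnormal
  have key := sum_sum_sq_commutator_le_of_normal_eq_diagonal h₁ h₂ (Unitary.conjStarAlgAut ℝ _ u Y)
  rwa [← map_mul, ← map_mul, ← map_sub, sum_sum_sq_conjStarAlgAut, sum_sum_sq_conjStarAlgAut,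
    sum_sum_sq_conjStarAlgAut] at key
end
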